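/- Fix real parameters 0 < α < γ and define μ, β, δ, k, x, z as in the unduloid setup. Then x and z are twice differentiable on ℝ and the signed curvature of the (unit-speed) generating curve of the unduloid satisfies, for every v ∈ ℝ: x'(v) z''(v) − x''(v) z'(v) = (x(v)² − αγ)/((α+γ)·x(v)²) = (γ−α)·[(γ−α) + (γ+α) sin(μv)] / (2(γ+α)·x(v)²). -/

import Mathlib

/-!
Along the profile, `x² = β sin(μv) + δ`, and the substitution `φ = μv/2 − π/4` turns the
elliptic radicand into `1 − k² sin²φ = x²/γ²`. The fundamental theorem of calculus therefore
gives `z' = (αγ/x + x)/(α+γ)`, so `z'' = (1 − αγ/x²) x'/(α+γ)`, while differentiating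
`x x' = βμ cos(μv)/2` gives `x x'' = −(βμ² sin(μv)/2 + x'²)`. The curvature only involves `x'²`,
and `(2xx')² = (βμ)² cos²(μv)` with `βμ = γ − α` reduces it to `(x² − αγ)/((α+γ)x²)`.
-/

open Real

/-- The incomplete elliptic integral of the first kind,
`F(φ, k) = ∫₀^φ (1 − k² sin²θ)^{−1/2} dθ`. -/
noncomputable def ellipticF (k φ : ℝ) : ℝ :=
  ∫ θ in (0:ℝ)..φ, (Real.sqrt (1 - k ^ 2 * Real.sin θ ^ 2))⁻¹

/-- The incomplete elliptic integral of the second kind,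
`E(φ, k) = ∫₀^φ (1 − k² sin²θ)^{1/2} dθ`. -/
noncomputable def ellipticE (k φ : ℝ) : ℝ :=
  ∫ θ in (0:ℝ)..φ, Real.sqrt (1 - k ^ 2 * Real.sin θ ^ 2)

theorem sin_sq_half_sub_pi_div_four (t : ℝ) : sin (t / 2 - π / 4) ^ 2 = (1 - sin t) / 2 := by
  rw [sin_sq_eq_half_sub, show 2 * (t / 2 - π / 4) = t - π / 2 by ring, cos_sub_pi_div_two]
  ring

theorem one_sub_sq_mul_sin_sq_pos {k : ℝ} (hk : k ^ 2 < 1) (θ : ℝ) :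
    0 < 1 - k ^ 2 * sin θ ^ 2 := by
  nlinarith [sin_sq_le_one θ, sq_nonneg (sin θ), sq_nonneg k]

theorem hasDerivAt_ellipticE (k φ : ℝ) :
    HasDerivAt (ellipticE k) √(1 - k ^ 2 * sin φ ^ 2) φ :=
  ((by fun_prop : Continuous fun θ ↦ √(1 - k ^ 2 * sin θ ^ 2)).integral_hasStrictDerivAt
    0 φ).hasDerivAt

theorem hasDerivAt_ellipticF {k : ℝ} (hk : k ^ 2 < 1) (φ : ℝ) :
    HasDerivAt (ellipticF k) (√(1 - k ^ 2 * sin φ ^ 2))⁻¹ φ := by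
  have hcont : Continuous fun θ ↦ (√(1 - k ^ 2 * sin θ ^ 2))⁻¹ :=
    (by fun_prop : Continuous fun θ ↦ √(1 - k ^ 2 * sin θ ^ 2)).inv₀
      fun θ ↦ (sqrt_pos.2 (one_sub_sq_mul_sin_sq_pos hk θ)).ne'
  exact (hcont.integral_hasStrictDerivAt 0 φ).hasDerivAt

theorem hasDerivAt_mul_ellipticF_add_mul_ellipticE {k a b φ' v : ℝ} {φ : ℝ → ℝ} (hk : k ^ 2 < 1)
    (hφ : HasDerivAt φ φ' v) :
    HasDerivAt (fun v ↦ a * ellipticF k (φ v) + b * ellipticE k (φ v))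
      (φ' * (a / √(1 - k ^ 2 * sin (φ v) ^ 2) + b * √(1 - k ^ 2 * sin (φ v) ^ 2))) v :=
  ((((hasDerivAt_ellipticF hk _).comp v hφ).const_mul a).add
    (((hasDerivAt_ellipticE k _).comp v hφ).const_mul b)).congr_deriv (by ring)

section Profile

variable {β δ μ : ℝ} {x : ℝ → ℝ}

theorem hasDerivAt_profile (hpos : ∀ v, 0 < β * sin (μ * v) + δ)
    (hx : ∀ v, x v = √(β * sin (μ * v) + δ)) (v : ℝ) :
    HasDerivAt x (β * μ * cos (μ * v) / (2 * x v)) v := by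
  rw [funext hx]
  exact (((((hasDerivAt_id' v).const_mul μ).sin.const_mul β).add_const δ).sqrt
    (hpos v).ne').congr_deriv (by ring)

theorem hasDerivAt_deriv_profile (hpos : ∀ v, 0 < β * sin (μ * v) + δ)
    (hx : ∀ v, x v = √(β * sin (μ * v) + δ)) (v : ℝ) :
    HasDerivAt (deriv x) (-(β * μ ^ 2 * sin (μ * v) / 2 + deriv x v ^ 2) / x v) v := by
  have hx' := hasDerivAt_profile hpos hx
  have hxv : x v ≠ 0 := by rw [hx]; exact (sqrt_pos.2 (hpos v)).ne'
  rw [(hx' v).deriv,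
    show deriv x = fun v ↦ β * μ * cos (μ * v) / (2 * x v) from funext fun v ↦ (hx' v).deriv]
  refine ((((hasDerivAt_id' v).const_mul μ).cos.const_mul (β * μ)).div ((hx' v).const_mul 2)
    (by positivity)).congr_deriv ?_
  field_simp
  ring

theorem hasDerivAt_deriv_of_hasDerivAt_div_add_self {z : ℝ → ℝ} {a c v : ℝ}
    (hz : ∀ v, HasDerivAt z ((a / x v + x v) / c) v) (hx : DifferentiableAt ℝ x v)
    (hxv : x v ≠ 0) : HasDerivAt (deriv z) ((1 - a / x v ^ 2) / c * deriv x v) v := by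
  rw [funext fun v ↦ (hz v).deriv]
  refine ((((hasDerivAt_const v a).div hx.hasDerivAt hxv).add hx.hasDerivAt).div_const
    c).congr_deriv ?_
  field_simp
  ring

end Profile

section Unduloid

variable {α γ μ β δ k : ℝ}

theorem unduloid_radicand_pos (hα : 0 < α) (hαγ : α < γ) (hβ : β = (γ ^ 2 - α ^ 2) / 2)
    (hδ : δ = (γ ^ 2 + α ^ 2) / 2) (t : ℝ) : 0 < β * sin t + δ := by
  rw [hβ, hδ]
  have hsin : 0 ≤ 1 + sin t := by linarith [neg_one_le_sin t]
  nlinarith [mul_nonneg hsin (sub_nonneg.2 (pow_le_pow_left₀ hα.le hαγ.le 2)), sin_le_one t]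

theorem hasDerivAt_unduloid_z {x z : ℝ → ℝ} (hα : 0 < α) (hαγ : α < γ)
    (hμ : μ = 2 / (α + γ)) (hβ : β = (γ ^ 2 - α ^ 2) / 2) (hδ : δ = (γ ^ 2 + α ^ 2) / 2)
    (hk : k = √(γ ^ 2 - α ^ 2) / γ) (hx : ∀ v, x v = √(β * sin (μ * v) + δ))
    (hz : ∀ v, z v = α * ellipticF k (μ * v / 2 - π / 4) + γ * ellipticE k (μ * v / 2 - π / 4))
    (v : ℝ) : HasDerivAt z ((α * γ / x v + x v) / (α + γ)) v := by
  have hγ : 0 < γ := hα.trans hαγ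
  have hk2 : k ^ 2 = (γ ^ 2 - α ^ 2) / γ ^ 2 := by
    rw [hk, div_pow, sq_sqrt (by nlinarith)]
  have hk1 : k ^ 2 < 1 := by
    rw [hk2, div_lt_one (by positivity)]
    nlinarith
  have hw : √(1 - k ^ 2 * sin (μ * v / 2 - π / 4) ^ 2) = x v / γ := by
    rw [hx, sin_sq_half_sub_pi_div_four, ← sqrt_sq hγ.le, ← sqrt_div' _ (by positivity), hk2,
      hβ, hδ]
    congr 1
    field_simp
    ring
  have hφ : HasDerivAt (fun v ↦ μ * v / 2 - π / 4) (μ / 2) v :=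
    ((((hasDerivAt_id' v).const_mul μ).div_const 2).sub_const (π / 4)).congr_deriv (by ring)
  have hxv : x v ≠ 0 := by
    rw [hx]
    exact (sqrt_pos.2 (unduloid_radicand_pos hα hαγ hβ hδ _)).ne'
  rw [funext hz]
  refine (hasDerivAt_mul_ellipticF_add_mul_ellipticE hk1 hφ).congr_deriv ?_
  rw [hw, hμ]
  field_simp

theorem unduloid_curvature_eq (hαγ : α + γ ≠ 0) (hμ : μ = 2 / (α + γ))
    (hβ : β = (γ ^ 2 - α ^ 2) / 2) (hδ : δ = (γ ^ 2 + α ^ 2) / 2) {X X' s : ℝ} (hX : X ≠ 0)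
    (hX2 : X ^ 2 = β * s + δ) (hX' : (2 * X * X') ^ 2 = (β * μ) ^ 2 * (1 - s ^ 2)) :
    X' * ((1 - α * γ / X ^ 2) / (α + γ) * X') - (-(β * μ ^ 2 * s / 2 + X' ^ 2) / X) *
      ((α * γ / X + X) / (α + γ)) = (X ^ 2 - α * γ) / ((α + γ) * X ^ 2) := by
  have hβμ : β * μ = γ - α := by
    rw [hβ, hμ]
    field_simp
    ring
  rw [hβμ] at hX'
  subst hμ hβ hδ
  field_simp
  linear_combination (α + γ) ^ 2 / 2 * hX' + ((γ ^ 2 - α ^ 2) * s - (α + γ) ^ 2) * hX2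

theorem unduloid_sq_sub_mul (hβ : β = (γ ^ 2 - α ^ 2) / 2) (hδ : δ = (γ ^ 2 + α ^ 2) / 2)
    {X s : ℝ} (hX2 : X ^ 2 = β * s + δ) :
    X ^ 2 - α * γ = (γ - α) * ((γ - α) + (γ + α) * s) / 2 := by
  rw [hX2, hβ, hδ]
  ring

end Unduloid

/-- In the unduloid setup with parameters `0 < α < γ`, the functions `x` and `z` are twice
differentiable on ℝ and the signed curvature of the (unit-speed) generating curve satisfies
`x'z'' − x''z' = (x² − αγ)/((α+γ)x²) = (γ−α)·[(γ−α) + (γ+α) sin(μv)]/(2(γ+α)x²)`. -/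
theorem statement_10 (α γ : ℝ) (hα : 0 < α) (hαγ : α < γ)
    (μ β δ k : ℝ) (hμ : μ = 2 / (α + γ)) (hβ : β = (γ ^ 2 - α ^ 2) / 2)
    (hδ : δ = (γ ^ 2 + α ^ 2) / 2) (hk : k = Real.sqrt (γ ^ 2 - α ^ 2) / γ)
    (x z : ℝ → ℝ)
    (hx : ∀ v, x v = Real.sqrt (β * Real.sin (μ * v) + δ))
    (hz : ∀ v, z v = α * ellipticF k (μ * v / 2 - Real.pi / 4) +
      γ * ellipticE k (μ * v / 2 - Real.pi / 4)) :
    Differentiable ℝ x ∧ Differentiable ℝ (deriv x) ∧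
    Differentiable ℝ z ∧ Differentiable ℝ (deriv z) ∧
    ∀ v : ℝ,
      deriv x v * deriv (deriv z) v - deriv (deriv x) v * deriv z v =
        ((x v) ^ 2 - α * γ) / ((α + γ) * (x v) ^ 2) ∧
      deriv x v * deriv (deriv z) v - deriv (deriv x) v * deriv z v =
        (γ - α) * ((γ - α) + (γ + α) * Real.sin (μ * v)) /
          (2 * (γ + α) * (x v) ^ 2) := by
  have hpos := unduloid_radicand_pos hα hαγ hβ hδ
  have hxpos : ∀ v, 0 < x v := fun v ↦ (hx v) ▸ sqrt_pos.2 (hpos _)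
  have hx' := hasDerivAt_profile (fun v ↦ hpos _) hx
  have hx'' := hasDerivAt_deriv_profile (fun v ↦ hpos _) hx
  have hz' := hasDerivAt_unduloid_z hα hαγ hμ hβ hδ hk hx hz
  have hz'' := fun v ↦ hasDerivAt_deriv_of_hasDerivAt_div_add_self hz' (hx' v).differentiableAt
    (hxpos v).ne'
  refine ⟨fun v ↦ (hx' v).differentiableAt, fun v ↦ (hx'' v).differentiableAt,
    fun v ↦ (hz' v).differentiableAt, fun v ↦ (hz'' v).differentiableAt, fun v ↦ ?_⟩
  have hx2 : x v ^ 2 = β * sin (μ * v) + δ := by rw [hx, sq_sqrt (hpos _).le]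
  have hxx' : (2 * x v * deriv x v) ^ 2 = (β * μ) ^ 2 * (1 - sin (μ * v) ^ 2) := by
    rw [(hx' v).deriv, mul_div_cancel₀ _ (mul_pos two_pos (hxpos v)).ne', ← cos_sq']
    ring
  rw [(hz'' v).deriv, (hx'' v).deriv, (hz' v).deriv]
  have hK := unduloid_curvature_eq (by linarith) hμ hβ hδ (hxpos v).ne' hx2 hxx'
  refine ⟨hK, hK.trans ?_⟩
  rw [unduloid_sq_sub_mul hβ hδ hx2, div_div, add_comm α γ]
  ring
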